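/- arXiv:1608.04331 — 13 statements merged into one kernel-verified Lean document; each statement's English description precedes it below -/
import Mathlib

section
/- For every cover U of a nonempty finite set X there exists a non-nested flag cover U* of X such that U refines U*, and U* refines every non-nested flag cover V of X that U refines. -/
/-- A cover of a set: a collection of nonempty subsets whose union is everything. -/
def IsCover {X : Type*} (C : Set (Set X)) : Prop :=
  (∀ A ∈ C, A.Nonempty) ∧ ⋃₀ C = Set.univ

/-- `C₁` refines `C₂` if every member of `C₁` is contained in some member of `C₂`. -/
def Refines {X : Type*} (C₁ C₂ : Set (Set X)) : Prop :=
  ∀ A ∈ C₁, ∃ B ∈ C₂, A ⊆ B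

/-- A non-nested flag cover: a cover that is non-nested and satisfies the flag condition. -/
def IsFlagCover {X : Type*} (C : Set (Set X)) : Prop :=
  IsCover C ∧
  (∀ A ∈ C, ∀ B ∈ C, A ⊆ B → A = B) ∧
  (∀ S : Set X, (∀ x ∈ S, ∀ y ∈ S, ∃ A ∈ C, x ∈ A ∧ y ∈ A) → ∃ A ∈ C, S ⊆ A)

/-!
The flagification of `U` is the family of maximal sets all of whose pairs lie in a common member
of `U`, i.e. the facets of the flag complex spanned by the 1-skeleton of `U`; they exist by Zorn's
lemma, since pairwise coverage has finite character. A set pairwise covered by these maximal sets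
is pairwise covered by `U`, hence lies in one of them: this is the flag condition. Conversely, a
flag cover `V` refined by `U` pairwise covers each such maximal set, so by its flag condition
contains it in a single member.
-/

open Set

section

variable {X : Type*}

def PairwiseCovered (C : Set (Set X)) (S : Set X) : Prop :=
  ∀ x ∈ S, ∀ y ∈ S, ∃ A ∈ C, x ∈ A ∧ y ∈ A

def flagification (U : Set (Set X)) : Set (Set X) :=
  {M | Maximal (PairwiseCovered U) M}

namespace PairwiseCovered

variable {C D : Set (Set X)} {S : Set X}

theorem of_subset_mem {A : Set X} (hA : A ∈ C) (hS : S ⊆ A) : PairwiseCovered C S :=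
  fun _ hx _ hy => ⟨A, hA, hS hx, hS hy⟩

theorem singleton (hC : ⋃₀ C = univ) (x : X) : PairwiseCovered C {x} := by
  obtain ⟨A, hA, hxA⟩ := mem_sUnion.mp (hC ▸ mem_univ x)
  exact of_subset_mem hA (singleton_subset_iff.mpr hxA)

theorem of_refines (hCD : Refines C D) (hS : PairwiseCovered C S) : PairwiseCovered D S := by
  intro x hx y hy
  obtain ⟨A, hA, hxA, hyA⟩ := hS x hx y hy
  obtain ⟨B, hB, hAB⟩ := hCD A hA
  exact ⟨B, hB, hAB hxA, hAB hyA⟩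

theorem sUnion_of_isChain {c : Set (Set X)} (hcC : ∀ T ∈ c, PairwiseCovered C T)
    (hc : IsChain (· ⊆ ·) c) : PairwiseCovered C (⋃₀ c) := by
  rintro x ⟨T₁, hT₁, hx⟩ y ⟨T₂, hT₂, hy⟩
  rcases hc.total hT₁ hT₂ with h | h
  · exact hcC T₂ hT₂ x (h hx) y hy
  · exact hcC T₁ hT₁ x hx y (h hy)

theorem exists_maximal (hS : PairwiseCovered C S) :
    ∃ M, S ⊆ M ∧ Maximal (PairwiseCovered C) M :=
  zorn_subset_nonempty {T | PairwiseCovered C T}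
    (fun c hcC hc _ => ⟨⋃₀ c, sUnion_of_isChain hcC hc, fun _ => subset_sUnion_of_mem⟩) S hS

end PairwiseCovered

variable {U : Set (Set X)}

theorem PairwiseCovered.of_flagification {S : Set X}
    (hS : PairwiseCovered (flagification U) S) : PairwiseCovered U S := by
  intro x hx y hy
  obtain ⟨M, hM, hxM, hyM⟩ := hS x hx y hy
  exact hM.prop x hxM y hyM

theorem refines_flagification : Refines U (flagification U) := fun _ hA =>
  let ⟨M, hAM, hM⟩ := (PairwiseCovered.of_subset_mem hA subset_rfl).exists_maximal
  ⟨M, hM, hAM⟩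

theorem flagification_refines {V : Set (Set X)}
    (hV : ∀ S, PairwiseCovered V S → ∃ A ∈ V, S ⊆ A) (hUV : Refines U V) :
    Refines (flagification U) V :=
  fun _ hM => hV _ (hM.prop.of_refines hUV)

theorem isFlagCover_flagification [Nonempty X] (hU : ⋃₀ U = univ) :
    IsFlagCover (flagification U) := by
  refine ⟨⟨?nonempty, ?covers⟩, ?nonNested, ?flag⟩
  case nonempty =>
    intro M hM
    obtain ⟨x⟩ := ‹Nonempty X›
    refine nonempty_iff_ne_empty.mpr fun hM₀ => singleton_ne_empty x ?_
    subst hM₀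
    exact (hM.eq_of_subset (PairwiseCovered.singleton hU x) (empty_subset _)).symm
  case covers =>
    refine eq_univ_of_forall fun x => ?_
    obtain ⟨M, hxM, hM⟩ := (PairwiseCovered.singleton hU x).exists_maximal
    exact ⟨M, hM, hxM rfl⟩
  case nonNested => exact fun A hA B hB hAB => hA.eq_of_subset hB.prop hAB
  case flag =>
    intro S hS
    obtain ⟨M, hSM, hM⟩ := (PairwiseCovered.of_flagification hS).exists_maximal
    exact ⟨M, hM, hSM⟩

end

theorem exists_flagification_general {X : Type*} [Nonempty X]
    (U : Set (Set X)) (hU : IsCover U) :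
    ∃ Ustar : Set (Set X), IsFlagCover Ustar ∧ Refines U Ustar ∧
      ∀ V : Set (Set X), IsFlagCover V → Refines U V → Refines Ustar V :=
  ⟨flagification U, isFlagCover_flagification hU.2, refines_flagification,
    fun _ hV hUV => flagification_refines hV.2.2 hUV⟩

/-- every cover `U` of a nonempty finite set admits a flagification `U*`:
a non-nested flag cover refined by `U` and refining every non-nested flag cover
that `U` refines. -/
theorem exists_flagification {X : Type*} [Fintype X] [Nonempty X]
    (U : Set (Set X)) (hU : IsCover U) :
    ∃ Ustar : Set (Set X), IsFlagCover Ustar ∧ Refines U Ustar ∧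
      ∀ V : Set (Set X), IsFlagCover V → Refines U V → Refines Ustar V :=
  exists_flagification_general U hU
end

section
/- Let X be a nonempty finite set, let δ > 0, and let C be a non-nested flag cover of X. Then there exists a metric d on X such that the maximal δ-linked subsets of (X, d) are exactly the members of C. (In particular, the map sending a metric on X to its collection of maximal δ-linked subsets is surjective onto the non-nested flag covers of X.) -/
/-- A set is `R`-linked if any two of its points are related by `R`. -/
def IsLinked {X : Type*} (R : X → X → Prop) (S : Set X) : Prop :=
  ∀ x ∈ S, ∀ y ∈ S, R x y

/-- A maximally `R`-linked set: `R`-linked and not properly contained in any `R`-linked set. -/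
def IsMaxLinked {X : Type*} (R : X → X → Prop) (S : Set X) : Prop :=
  IsLinked R S ∧ ∀ T : Set X, IsLinked R T → S ⊆ T → S = T

/-- for any non-nested flag cover `C` of a nonempty finite set `X` and any
`δ > 0`, there is a metric `d` on `X` whose maximal `δ`-linked subsets are exactly the
members of `C`; i.e. `ML_δ` is surjective onto non-nested flag covers. -/
theorem ML_surjective {X : Type*} [Fintype X] [Nonempty X] (δ : ℝ) (hδ : 0 < δ)
    (C : Set (Set X)) (hC : IsFlagCover C) :
    ∃ d : X → X → ℝ,
      (∀ x, d x x = 0) ∧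
      (∀ x y, d x y = d y x) ∧
      (∀ x y z, d x z ≤ d x y + d y z) ∧
      (∀ x y, d x y = 0 → x = y) ∧
      {A : Set X | IsMaxLinked (fun x y => d x y ≤ δ) A} = C := by
  classical
  obtain ⟨⟨hne, hcov⟩, hnn, hflag⟩ := hC
  have hmem : ∀ x : X, ∃ A ∈ C, x ∈ A := by
    intro x
    have : x ∈ ⋃₀ C := hcov ▸ Set.mem_univ x
    simpa [Set.mem_sUnion] using this
  set d : X → X → ℝ := fun x y =>
    if x = y then 0 else if ∃ A ∈ C, x ∈ A ∧ y ∈ A then δ else 2 * δ with hd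
  have dself : ∀ x, d x x = 0 := by intro x; simp [hd]
  have hsym : ∀ x y : X, (∃ A ∈ C, x ∈ A ∧ y ∈ A) ↔ ∃ A ∈ C, y ∈ A ∧ x ∈ A := fun x y =>
    ⟨fun ⟨A, h, a, b⟩ => ⟨A, h, b, a⟩, fun ⟨A, h, a, b⟩ => ⟨A, h, b, a⟩⟩
  have dsymm : ∀ x y, d x y = d y x := by
    intro x y
    by_cases h : x = y
    · simp [hd, h]
    · have h' : ¬ y = x := fun e => h e.symm
      by_cases h2 : ∃ A ∈ C, x ∈ A ∧ y ∈ A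
      · have h3 : ∃ A ∈ C, y ∈ A ∧ x ∈ A := (hsym x y).mp h2
        simp [hd, h, h', h2, h3]
      · have h3 : ¬ ∃ A ∈ C, y ∈ A ∧ x ∈ A := fun h3 => h2 ((hsym y x).mp h3)
        simp [hd, h, h', h2, h3]
  have dle : ∀ x y, d x y ≤ 2 * δ := by
    intro x y
    by_cases h : x = y
    · simp [hd, h]; linarith
    · by_cases h2 : ∃ A ∈ C, x ∈ A ∧ y ∈ A <;> simp [hd, h, h2] <;> linarith
  have dge : ∀ x y, x ≠ y → δ ≤ d x y := by
    intro x y h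
    by_cases h2 : ∃ A ∈ C, x ∈ A ∧ y ∈ A <;> simp [hd, h, h2] <;> linarith
  have dtri : ∀ x y z, d x z ≤ d x y + d y z := by
    intro x y z
    by_cases hxy : x = y
    · subst hxy; simp [dself]
    · by_cases hyz : y = z
      · subst hyz; simp [dself]
      · have h1 := dge x y hxy
        have h2 := dge y z hyz
        have h3 := dle x z
        linarith
  have dpos : ∀ x y, d x y = 0 → x = y := by
    intro x y h
    by_contra hne'
    have := dge x y hne'
    linarith
  -- characterize linkedness
  have hlink : ∀ S : Set X,
      IsLinked (fun x y => d x y ≤ δ) S ↔ ∀ x ∈ S, ∀ y ∈ S, ∃ A ∈ C, x ∈ A ∧ y ∈ A := by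
    intro S
    constructor
    · intro hL x hx y hy
      by_cases h : x = y
      · subst h
        obtain ⟨A, hA, hxA⟩ := hmem x
        exact ⟨A, hA, hxA, hxA⟩
      · by_contra h2
        have h3 : d x y = 2 * δ := by simp [hd, h, h2]
        have h4 : d x y ≤ δ := hL x hx y hy
        rw [h3] at h4
        linarith
    · intro hL x hx y hy
      by_cases h : x = y
      · simp [hd, h]; linarith
      · have h2 := hL x hx y hy
        simp [hd, h, h2]
  refine ⟨d, dself, dsymm, dtri, dpos, ?_⟩
  ext A
  simp only [Set.mem_setOf_eq]
  constructor
  · rintro ⟨hA, hmax⟩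
    obtain ⟨B, hB, hAB⟩ := hflag A ((hlink A).mp hA)
    have hBlinked : IsLinked (fun x y => d x y ≤ δ) B :=
      (hlink B).mpr (fun x hx y hy => ⟨B, hB, hx, hy⟩)
    have := hmax B hBlinked hAB
    rwa [this]
  · intro hA
    refine ⟨(hlink A).mpr (fun x hx y hy => ⟨A, hA, hx, hy⟩), ?_⟩
    intro T hT hAT
    obtain ⟨B, hB, hTB⟩ := hflag T ((hlink T).mp hT)
    have hAB : A = B := hnn A hA B hB (hAT.trans hTB)
    exact le_antisymm hAT (hAB ▸ hTB)
end

section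
/- Let (X, d_X) and (Y, d_Y) be finite metric spaces, let f : X → Y be a nonexpansive map, and let δ ≥ 0. Then every connected component of the δ-threshold graph of X is contained in f⁻¹(B) for some connected component B of the δ-threshold graph of Y; that is, SL_δ(X) refines f⁻¹(SL_δ(Y)). -/
/-- A nonexpansive map between metric spaces. -/
def Nonexpansive {X Y : Type*} [MetricSpace X] [MetricSpace Y] (f : X → Y) : Prop :=
  ∀ x x' : X, dist (f x) (f x') ≤ dist x x'

/-- The `δ`-threshold graph of a metric space: distinct points are adjacent
iff their distance is at most `δ`. -/
def thresholdGraph (X : Type*) [MetricSpace X] (δ : ℝ) : SimpleGraph X where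
  Adj x y := x ≠ y ∧ dist x y ≤ δ
  symm := ⟨fun x y h => ⟨h.1.symm, by rw [dist_comm]; exact h.2⟩⟩
  loopless := ⟨fun x h => h.1 rfl⟩

/-- The single-linkage clusters at scale `δ`: the vertex sets of the connected
components of the `δ`-threshold graph. -/
def slClusters (X : Type*) [MetricSpace X] (δ : ℝ) : Set (Set X) :=
  {A : Set X | ∃ c : (thresholdGraph X δ).ConnectedComponent, A = c.supp}

lemma thresholdGraph_reachable_of_dist_le {Y : Type*} [MetricSpace Y] {δ : ℝ} {y y' : Y}
    (h : dist y y' ≤ δ) : (thresholdGraph Y δ).Reachable y y' := by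
  by_cases hyy' : y = y'
  · exact hyy' ▸ SimpleGraph.Reachable.refl y
  · exact SimpleGraph.Adj.reachable ⟨hyy', h⟩

-- `f` may collapse an edge to a point, so it is not a graph hom and `Reachable.map` does not apply.
lemma Nonexpansive.reachable_thresholdGraph {X Y : Type*} [MetricSpace X] [MetricSpace Y]
    {f : X → Y} (hf : Nonexpansive f) {δ : ℝ} {x x' : X}
    (h : (thresholdGraph X δ).Reachable x x') : (thresholdGraph Y δ).Reachable (f x) (f x') := by
  rw [SimpleGraph.reachable_iff_reflTransGen] at h ⊢
  refine Relation.ReflTransGen.lift' f (fun a b hab => ?_) _ _ h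
  exact (SimpleGraph.reachable_iff_reflTransGen _ _).mp
    (thresholdGraph_reachable_of_dist_le ((hf a b).trans hab.2))

theorem SL_refines_pullback_general {X Y : Type*}
    [MetricSpace X] [MetricSpace Y]
    (f : X → Y) (hf : Nonexpansive f) (δ : ℝ) :
    ∀ A ∈ slClusters X δ, ∃ B ∈ slClusters Y δ, A ⊆ f ⁻¹' B := by
  rintro A ⟨c, rfl⟩
  induction c using SimpleGraph.ConnectedComponent.ind with
  | h v =>
    refine ⟨_, ⟨(thresholdGraph Y δ).connectedComponentMk (f v), rfl⟩, fun x hx => ?_⟩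
    exact SimpleGraph.ConnectedComponent.eq.mpr
      (hf.reachable_thresholdGraph (SimpleGraph.ConnectedComponent.eq.mp hx))

/-- for a nonexpansive map `f : X → Y` of finite metric spaces and `δ ≥ 0`,
every connected component of the `δ`-threshold graph of `X` is contained in `f⁻¹(B)` for
some connected component `B` of the `δ`-threshold graph of `Y`; i.e. `SL_δ(X)` refines
`f⁻¹(SL_δ(Y))`. -/
theorem SL_refines_pullback {X Y : Type*}
    [MetricSpace X] [Fintype X] [Nonempty X]
    [MetricSpace Y] [Fintype Y] [Nonempty Y]
    (f : X → Y) (hf : Nonexpansive f) (δ : ℝ) (hδ : 0 ≤ δ) :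
    ∀ A ∈ slClusters X δ, ∃ B ∈ slClusters Y δ, A ⊆ f ⁻¹' B :=
  SL_refines_pullback_general f hf δ
end

section
/- Let (T_i)_{i ∈ I} be a family of finite metric spaces. For a finite metric space (X, d_X), define the relation R_X on X by: x R_X y if and only if there exist i ∈ I and a nonexpansive map t : T_i → X with x and y in the range of t. Then for every nonexpansive map f : X → Y between finite metric spaces, every maximally R_X-linked subset of X is contained in f⁻¹(B) for some maximally R_Y-linked subset B of Y; that is, the clustering scheme ML^T generated by the family (T_i) is functorial for nonexpansive maps. -/
/-- The relation generated on `X` by a family of test metric spaces `T i`: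
`x R y` iff some nonexpansive map from some `T i` into `X` has both `x` and `y`
in its range. -/
def genRel {I : Type*} (T : I → Type*) [∀ i, MetricSpace (T i)]
    (X : Type*) [MetricSpace X] (x y : X) : Prop :=
  ∃ (i : I) (t : T i → X), Nonexpansive t ∧ x ∈ Set.range t ∧ y ∈ Set.range t

/-!
Nonexpansive maps compose, so a nonexpansive `f : X → Y` carries the generated relation on `X`
into the one on `Y`, and hence maps linked sets to linked sets. The union of a chain of linked
sets is linked (any two of its points already lie in one member), so by Zorn's lemma the linked
set `f '' S` extends to a maximally linked set `B`, and then `S ⊆ f ⁻¹' B`.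
-/

theorem Nonexpansive.comp {X Y Z : Type*} [MetricSpace X] [MetricSpace Y] [MetricSpace Z]
    {g : Y → Z} {f : X → Y} (hg : Nonexpansive g) (hf : Nonexpansive f) :
    Nonexpansive (g ∘ f) :=
  fun x x' => (hg (f x) (f x')).trans (hf x x')

theorem genRel.map {I : Type*} {T : I → Type*} [∀ i, MetricSpace (T i)]
    {X Y : Type*} [MetricSpace X] [MetricSpace Y] {f : X → Y} (hf : Nonexpansive f)
    {x y : X} (h : genRel T X x y) : genRel T Y (f x) (f y) := by
  obtain ⟨i, t, ht, ⟨a, rfl⟩, ⟨b, rfl⟩⟩ := h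
  exact ⟨i, f ∘ t, hf.comp ht, ⟨a, rfl⟩, ⟨b, rfl⟩⟩

theorem IsLinked.image {X Y : Type*} {R : X → X → Prop} {R' : Y → Y → Prop} {f : X → Y}
    (hf : ∀ x y, R x y → R' (f x) (f y)) {S : Set X} (hS : IsLinked R S) :
    IsLinked R' (f '' S) := by
  rintro _ ⟨x, hx, rfl⟩ _ ⟨y, hy, rfl⟩
  exact hf x y (hS x hx y hy)

theorem IsLinked.sUnion_of_isChain {X : Type*} {R : X → X → Prop} {c : Set (Set X)}
    (hc : IsChain (· ⊆ ·) c) (hlinked : ∀ A ∈ c, IsLinked R A) : IsLinked R (⋃₀ c) := by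
  rintro x ⟨A, hA, hxA⟩ y ⟨A', hA', hyA'⟩
  rcases hc.total hA hA' with hAA' | hA'A
  · exact hlinked A' hA' x (hAA' hxA) y hyA'
  · exact hlinked A hA x hxA y (hA'A hyA')

theorem IsLinked.exists_isMaxLinked_superset {X : Type*} {R : X → X → Prop} {S : Set X}
    (hS : IsLinked R S) : ∃ B, IsMaxLinked R B ∧ S ⊆ B := by
  obtain ⟨B, hSB, hB⟩ := zorn_subset_nonempty {A | IsLinked R A}
    (fun c hcl hc _ => ⟨⋃₀ c, IsLinked.sUnion_of_isChain hc hcl,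
      fun _ => Set.subset_sUnion_of_mem⟩) S hS
  exact ⟨B, ⟨hB.prop, fun A hA hBA => hB.eq_of_subset hA hBA⟩, hSB⟩

theorem genML_functorial_general {I : Type*} (T : I → Type*)
    [∀ i, MetricSpace (T i)]
    {X Y : Type*} [MetricSpace X]
    [MetricSpace Y]
    (f : X → Y) (hf : Nonexpansive f) :
    ∀ S : Set X, IsMaxLinked (genRel T X) S →
      ∃ B : Set Y, IsMaxLinked (genRel T Y) B ∧ S ⊆ f ⁻¹' B := by
  intro S hS
  obtain ⟨B, hB, hSB⟩ := (hS.1.image fun _ _ => genRel.map hf).exists_isMaxLinked_superset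
  exact ⟨B, hB, Set.image_subset_iff.mp hSB⟩

/-- the clustering scheme `ML^T` generated by a family of finite metric spaces
`(T i)` is functorial: for every nonexpansive `f : X → Y`, every maximally `R_X`-linked
subset of `X` is contained in `f⁻¹(B)` for some maximally `R_Y`-linked subset `B` of `Y`. -/
theorem genML_functorial {I : Type*} (T : I → Type*)
    [∀ i, MetricSpace (T i)] [∀ i, Fintype (T i)] [∀ i, Nonempty (T i)]
    {X Y : Type*} [MetricSpace X] [Fintype X] [Nonempty X]
    [MetricSpace Y] [Fintype Y] [Nonempty Y]
    (f : X → Y) (hf : Nonexpansive f) :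
    ∀ S : Set X, IsMaxLinked (genRel T X) S →
      ∃ B : Set Y, IsMaxLinked (genRel T Y) B ∧ S ⊆ f ⁻¹' B :=
  genML_functorial_general T f hf
end

section
/- Let (X, d_X) and (Y, d_Y) be finite metric spaces, let f : X → Y be a nonexpansive map, let δ ≥ 0, and let k ≥ 1 be an integer. Then every maximally R^k_δ-linked subset of X is contained in f⁻¹(B) for some maximally R^k_δ-linked subset B of Y; that is, the k-linkage clustering L^k_δ(X) refines f⁻¹(L^k_δ(Y)). -/
/-- The relation `R^k_δ`: `x` and `y` are joined by a chain of `k` steps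
(not necessarily distinct points), each of length at most `δ`. -/
def RelChain {X : Type*} [MetricSpace X] (δ : ℝ) (k : ℕ) (x y : X) : Prop :=
  ∃ c : ℕ → X, c 0 = x ∧ c k = y ∧ ∀ i < k, dist (c i) (c (i + 1)) ≤ δ

/-- Every linked set extends to a maximally linked set. -/
lemma exists_maxLinked {X : Type*} (R : X → X → Prop) (S : Set X)
    (hS : IsLinked R S) : ∃ B : Set X, IsMaxLinked R B ∧ S ⊆ B := by
  obtain ⟨m, hSm, hm⟩ := zorn_subset_nonempty {T : Set X | IsLinked R T}
    (fun c hc hchain hne => by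
      refine ⟨⋃₀ c, ?_, fun s hs => Set.subset_sUnion_of_mem hs⟩
      rintro x ⟨s, hs, hx⟩ y ⟨t, ht, hy⟩
      rcases hchain.total hs ht with h | h
      · exact hc ht x (h hx) y hy
      · exact hc hs x hx y (h hy)) S hS
  exact ⟨m, ⟨hm.1, fun T hT hmT => (hm.2 hT hmT).antisymm' hmT⟩, hSm⟩

/-- `k`-linkage clustering is functorial: for a nonexpansive map `f : X → Y`
of finite metric spaces, `δ ≥ 0` and an integer `k ≥ 1`, every maximally `R^k_δ`-linked
subset of `X` is contained in `f⁻¹(B)` for some maximally `R^k_δ`-linked subset `B` of `Y`;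
i.e. `L^k_δ(X)` refines `f⁻¹(L^k_δ(Y))`. -/
theorem kLinkage_functorial {X Y : Type*}
    [MetricSpace X] [Fintype X] [Nonempty X]
    [MetricSpace Y] [Fintype Y] [Nonempty Y]
    (f : X → Y) (hf : Nonexpansive f) (δ : ℝ) (hδ : 0 ≤ δ) (k : ℕ) (hk : 1 ≤ k) :
    ∀ A : Set X, IsMaxLinked (RelChain δ k) A →
      ∃ B : Set Y, IsMaxLinked (RelChain δ k) B ∧ A ⊆ f ⁻¹' B := by
  intro A hA
  have himg : IsLinked (RelChain δ k) (f '' A) := by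
    rintro _ ⟨x, hx, rfl⟩ _ ⟨y, hy, rfl⟩
    obtain ⟨c, hc0, hck, hstep⟩ := hA.1 x hx y hy
    exact ⟨f ∘ c, by simp [hc0], by simp [hck],
      fun i hi => (hf _ _).trans (hstep i hi)⟩
  obtain ⟨B, hB, hsub⟩ := exists_maxLinked _ _ himg
  exact ⟨B, hB, fun x hx => hsub ⟨x, hx, rfl⟩⟩
end

section
/- Let F be a clustering functor such that for every ε > 0, F(Λ_ε) consists of the two singleton clusters {p} and {q}. Then for every finite metric space (X, d_X), F(X, d_X) is the cover of X by singletons. -/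
/-- The two-point metric space `Λ_ε` on `Bool` (`p := false`, `q := true`),
with `dist p q = ε`. -/
noncomputable def lambdaMet {ε : ℝ} (hε : 0 < ε) : MetricSpace Bool :=
  MetricSpace.induced (fun b => if b then ε else 0)
    (by intro a b h; cases a <;> cases b <;> simp_all)
    inferInstance

/-- A clustering functor: an assignment of a non-nested flag cover to every finite
metric space, functorial with respect to nonexpansive maps. -/
structure ClusteringFunctor where
  /-- the flag cover assigned to a finite metric space -/
  cover : (X : Type) → [inst1 : MetricSpace X] → [inst2 : Fintype X] →
    [inst3 : Nonempty X] → Set (Set X)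
  flag : ∀ (X : Type) [MetricSpace X] [Fintype X] [Nonempty X], IsFlagCover (cover X)
  functorial : ∀ (X Y : Type) [MetricSpace X] [Fintype X] [Nonempty X]
      [MetricSpace Y] [Fintype Y] [Nonempty Y]
      (f : X → Y), Nonexpansive f →
      ∀ A ∈ cover X, ∃ B ∈ cover Y, A ⊆ f ⁻¹' B

lemma cover_subsingleton (F : ClusteringFunctor)
    (h : ∀ (ε : ℝ) (hε : 0 < ε),
      F.cover Bool (inst1 := lambdaMet hε) = {{false}, {true}})
    (X : Type) [MetricSpace X] [Fintype X] [Nonempty X]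
    (A : Set X) (hA : A ∈ F.cover X) {x y : X} (hx : x ∈ A) (hy : y ∈ A) : x = y := by
  classical
  by_contra hxy
  set s : Finset ℝ := (Finset.univ.erase x).image (dist x) with hs
  have hsne : s.Nonempty :=
    ⟨dist x y, Finset.mem_image.mpr ⟨y, Finset.mem_erase.mpr ⟨Ne.symm hxy, Finset.mem_univ y⟩, rfl⟩⟩
  set ε := s.min' hsne with hεdef
  have hε : 0 < ε := by
    obtain ⟨w, hw, hwd⟩ := Finset.mem_image.mp (s.min'_mem hsne)
    rw [hεdef, ← hwd]
    exact dist_pos.mpr (Ne.symm ((Finset.mem_erase.mp hw).1))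
  letI : MetricSpace Bool := lambdaMet hε
  have hdist : ∀ a b : Bool, dist a b = |(if a then ε else 0) - (if b then ε else 0)| :=
    fun a b => rfl
  let f : X → Bool := fun z => decide (z ≠ x)
  have hle : ∀ w : X, w ≠ x → ε ≤ dist x w := fun w hw =>
    Finset.min'_le s _ (Finset.mem_image.mpr ⟨w, Finset.mem_erase.mpr ⟨hw, Finset.mem_univ w⟩, rfl⟩)
  have hf : Nonexpansive f := by
    intro z w
    rw [hdist]
    by_cases hz : z = x <;> by_cases hw : w = x
    · subst hz; subst hw; simp [f]
    · subst hz
      simpa [f, hw, zero_sub, abs_neg, abs_of_pos hε] using hle w hw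
    · subst hw
      have := hle z hz
      rw [dist_comm] at this
      simpa [f, hz, abs_of_pos hε] using this
    · simpa [f, hz, hw] using dist_nonneg
  obtain ⟨B, hB, hAB⟩ := F.functorial X Bool f hf A hA
  rw [h ε hε] at hB
  have hxB : f x ∈ B := hAB hx
  have hyB : f y ∈ B := hAB hy
  have h1 : f x = false := by simp [f]
  have h2 : f y = true := by simp [f, Ne.symm hxy]
  rcases hB with rfl | rfl <;> simp_all

/-- if a clustering functor assigns to every `Λ_ε` (ε > 0) the two singleton
clusters, then it assigns to every finite metric space the cover by singletons. -/
theorem trivial_discrete (F : ClusteringFunctor)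
    (h : ∀ (ε : ℝ) (hε : 0 < ε),
      F.cover Bool (inst1 := lambdaMet hε) = {{false}, {true}}) :
    ∀ (X : Type) [MetricSpace X] [Fintype X] [Nonempty X],
      F.cover X = {A : Set X | ∃ x : X, A = {x}} := by
  intro X _ _ _
  ext A
  simp only [Set.mem_setOf_eq]
  constructor
  · intro hA
    obtain ⟨x, hx⟩ := (F.flag X).1.1 A hA
    refine ⟨x, ?_⟩
    ext z
    simp only [Set.mem_singleton_iff]
    exact ⟨fun hz => cover_subsingleton F h X A hA hz hx, fun hz => hz ▸ hx⟩
  · rintro ⟨x, rfl⟩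
    have hx : x ∈ ⋃₀ F.cover X := (F.flag X).1.2 ▸ Set.mem_univ x
    obtain ⟨B, hB, hxB⟩ := hx
    have : B = {x} := by
      ext z
      simp only [Set.mem_singleton_iff]
      exact ⟨fun hz => cover_subsingleton F h X B hB hz hxB, fun hz => hz ▸ hxB⟩
    exact this ▸ hB
end

section
/- Let F be a clustering functor such that for every ε > 0, F(Λ_ε) consists of the single two-point cluster {p, q}. Then for every finite metric space (X, d_X), F(X, d_X) is the trivial cover {X}. -/
/-- if a clustering functor assigns to every `Λ_ε` (ε > 0) the single
two-point cluster, then it assigns to every finite metric space the trivial cover `{X}`. -/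
theorem trivial_indiscrete (F : ClusteringFunctor)
    (h : ∀ (ε : ℝ) (hε : 0 < ε),
      F.cover Bool (inst1 := lambdaMet hε) = {{false, true}}) :
    ∀ (X : Type) [MetricSpace X] [Fintype X] [Nonempty X],
      F.cover X = {(Set.univ : Set X)} := by
  intro X _ _ _
  obtain ⟨⟨hne, hcov⟩, hnn, hflag⟩ := F.flag X
  have key : ∀ x y : X, ∃ A ∈ F.cover X, x ∈ A ∧ y ∈ A := by
    intro x y
    by_cases hxy : x = y
    · subst hxy
      have hx : x ∈ ⋃₀ F.cover X := by rw [hcov]; trivial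
      obtain ⟨A, hA, hxA⟩ := hx
      exact ⟨A, hA, hxA, hxA⟩
    · have hε : 0 < dist x y := dist_pos.mpr hxy
      letI := lambdaMet hε
      have hd : (dist (false : Bool) (true : Bool) : ℝ) = dist x y := by
        show dist (0 : ℝ) (dist x y) = dist x y
        simp [Real.dist_eq, abs_of_pos hε]
      have hg : Nonexpansive (fun b : Bool => if b then y else x) := by
        intro a b
        have hd' : (dist (true : Bool) (false : Bool) : ℝ) = dist x y := by
          rw [dist_comm]; exact hd
        cases a <;> cases b <;>
          simp [hd, hd', dist_comm y x, le_refl, dist_nonneg]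
      obtain ⟨B, hB, hsub⟩ := F.functorial Bool X _ hg {false, true}
        (by rw [h _ hε]; rfl)
      have hx' := hsub (show false ∈ ({false, true} : Set Bool) by simp)
      have hy' := hsub (show true ∈ ({false, true} : Set Bool) by simp)
      simp only [Set.mem_preimage, if_pos, if_neg, Bool.false_eq_true,
        not_false_iff, ite_true, ite_false] at hx' hy'
      exact ⟨B, hB, hx', hy'⟩
  have huniv : Set.univ ∈ F.cover X := by
    obtain ⟨A, hA, hsub⟩ := hflag Set.univ (fun x _ y _ => key x y)
    have hA' : A = Set.univ := Set.eq_univ_of_univ_subset hsub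
    rwa [hA'] at hA
  ext A
  simp only [Set.mem_singleton_iff]
  constructor
  · intro hA
    exact hnn A hA Set.univ huniv (Set.subset_univ A)
  · intro hA; rw [hA]; exact huniv
end

section
/- Let F be a non-trivial clustering functor with clustering parameter δ > 0, i.e., F(Λ_ε) is the single two-point cluster {p, q} for all 0 < ε ≤ δ, and F(Λ_ε) is the pair of singleton clusters {p}, {q} for all ε > δ. Then for every finite metric space (X, d_X), the cover F(X, d_X) refines the single-linkage clustering SL_δ(X): every cluster of F(X, d_X) is contained in a connected component of the δ-threshold graph of X. -/
/-!
A cluster of `F(X)` cannot be split by a set `s` all of whose cross distances exceed `δ`: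
if `ε > δ` is the least cross distance, the indicator of `s` is a nonexpansive map
`X → Λ_ε`, and `F(Λ_ε)` consists of two singletons, so functoriality forces the cluster into
`s` or into its complement. A connected component of the `δ`-threshold graph is such a set.
-/

lemma lambdaMet_dist {ε : ℝ} (hε : 0 < ε) (a b : Bool) :
    @dist Bool (lambdaMet hε).toDist a b = if a = b then 0 else ε := by
  change dist (if a then ε else 0 : ℝ) (if b then ε else 0) = _
  cases a <;> cases b <;> simp [Real.dist_eq, abs_of_pos hε]

lemma nonexpansive_lambdaMet {X : Type*} [MetricSpace X] {ε : ℝ} (hε : 0 < ε) {f : X → Bool}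
    (hf : ∀ x y, f x ≠ f y → ε ≤ dist x y) : @Nonexpansive X Bool _ (lambdaMet hε) f := by
  intro x y
  rw [lambdaMet_dist]
  split_ifs with hxy
  · exact dist_nonneg
  · exact hf x y hxy

lemma exists_gap_of_lt_dist {X : Type*} [MetricSpace X] [Finite X] {s : Set X} {δ : ℝ}
    (hs : ∀ x ∈ s, ∀ y ∉ s, δ < dist x y) :
    ∃ ε, 0 < ε ∧ δ < ε ∧ ∀ x ∈ s, ∀ y ∉ s, ε ≤ dist x y := by
  by_cases hcross : {p : X × X | p.1 ∈ s ∧ p.2 ∉ s}.Nonempty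
  · obtain ⟨⟨x, y⟩, ⟨hx, hy⟩, hmin⟩ :=
      Set.exists_min_image _ (fun p : X × X => dist p.1 p.2) (Set.toFinite _) hcross
    have hxy : x ≠ y := fun h => hy (h ▸ hx)
    exact ⟨dist x y, dist_pos.2 hxy, hs x hx y hy, fun x' hx' y' hy' => hmin (x', y') ⟨hx', hy'⟩⟩
  · refine ⟨|δ| + 1, by positivity, by linarith [le_abs_self δ], fun x hx y hy => ?_⟩
    exact absurd ⟨(x, y), hx, hy⟩ hcross

lemma thresholdGraph_lt_dist {X : Type*} [MetricSpace X] {δ : ℝ}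
    (c : (thresholdGraph X δ).ConnectedComponent) :
    ∀ x ∈ c.supp, ∀ y ∉ c.supp, δ < dist x y := by
  intro x hx y hy
  by_contra! hle
  exact hy (c.mem_supp_of_adj_mem_supp hx ⟨fun h => hy (h ▸ hx), hle⟩)

lemma ClusteringFunctor.subset_or_subset_compl (F : ClusteringFunctor) {δ : ℝ}
    (hsplit : ∀ (ε : ℝ) (hε : 0 < ε), δ < ε →
      F.cover Bool (inst1 := lambdaMet hε) = {{false}, {true}})
    {X : Type} [MetricSpace X] [Fintype X] [Nonempty X] {s : Set X}
    (hs : ∀ x ∈ s, ∀ y ∉ s, δ < dist x y) {A : Set X} (hA : A ∈ F.cover X) :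
    A ⊆ s ∨ A ⊆ sᶜ := by
  classical
  obtain ⟨ε, hε, hδε, hgap⟩ := exists_gap_of_lt_dist hs
  let f : X → Bool := fun x => decide (x ∈ s)
  have hf : @Nonexpansive X Bool _ (lambdaMet hε) f := by
    refine nonexpansive_lambdaMet hε fun x y hxy => ?_
    by_cases hx : x ∈ s <;> by_cases hy : y ∈ s
    · simp [f, hx, hy] at hxy
    · exact hgap x hx y hy
    · exact dist_comm y x ▸ hgap y hy x hx
    · simp [f, hx, hy] at hxy
  obtain ⟨B, hB, hAB⟩ := @F.functorial X Bool _ _ _ (lambdaMet hε) _ _ f hf A hA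
  rw [hsplit ε hε hδε] at hB
  rcases hB with rfl | rfl
  · exact Or.inr fun x hx => by simpa [f] using hAB hx
  · exact Or.inl fun x hx => by simpa [f] using hAB hx

theorem functor_refines_SL_general (F : ClusteringFunctor) (δ : ℝ)
    (h2 : ∀ (ε : ℝ) (hε : 0 < ε), δ < ε →
      F.cover Bool (inst1 := lambdaMet hε) = {{false}, {true}}) :
    ∀ (X : Type) [MetricSpace X] [Fintype X] [Nonempty X],
      ∀ A ∈ F.cover X,
        ∃ c : (thresholdGraph X δ).ConnectedComponent, A ⊆ c.supp := by
  intro X _ _ _ A hA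
  obtain ⟨x, hx⟩ := (F.flag X).1.1 A hA
  let c := (thresholdGraph X δ).connectedComponentMk x
  refine ⟨c, ?_⟩
  rcases F.subset_or_subset_compl h2 (thresholdGraph_lt_dist c) hA with hsub | hsub
  · exact hsub
  · exact absurd rfl (hsub hx)

/-- a non-trivial clustering functor `F` with clustering parameter `δ > 0`
(it merges `Λ_ε` for `0 < ε ≤ δ` and separates `Λ_ε` for `ε > δ`) has output refining
single linkage: every cluster of `F(X)` is contained in a connected component of the
`δ`-threshold graph of `X`. -/
theorem functor_refines_SL (F : ClusteringFunctor) (δ : ℝ) (hδ : 0 < δ)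
    (h1 : ∀ (ε : ℝ) (hε : 0 < ε), ε ≤ δ →
      F.cover Bool (inst1 := lambdaMet hε) = {{false, true}})
    (h2 : ∀ (ε : ℝ) (hε : 0 < ε), δ < ε →
      F.cover Bool (inst1 := lambdaMet hε) = {{false}, {true}}) :
    ∀ (X : Type) [MetricSpace X] [Fintype X] [Nonempty X],
      ∀ A ∈ F.cover X,
        ∃ c : (thresholdGraph X δ).ConnectedComponent, A ⊆ c.supp :=
  functor_refines_SL_general F δ h2
end

section
/- Let F be a non-trivial clustering functor with clustering parameter δ > 0, i.e., F(Λ_ε) is the single two-point cluster {p, q} for all 0 < ε ≤ δ, and F(Λ_ε) is the pair of singleton clusters {p}, {q} for all ε > δ. Then for every finite metric space (X, d_X), the maximal-linkage clustering ML_δ(X) refines F(X, d_X): every maximal δ-linked subset of X is contained in some cluster of F(X, d_X). -/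
/-- a non-trivial clustering functor `F` with clustering parameter `δ > 0`
(it merges `Λ_ε` for `0 < ε ≤ δ` and separates `Λ_ε` for `ε > δ`) is refined by maximal
linkage: every maximal `δ`-linked subset of `X` is contained in a cluster of `F(X)`. -/
theorem ML_refines_functor (F : ClusteringFunctor) (δ : ℝ) (hδ : 0 < δ)
    (h1 : ∀ (ε : ℝ) (hε : 0 < ε), ε ≤ δ →
      F.cover Bool (inst1 := lambdaMet hε) = {{false, true}})
    (h2 : ∀ (ε : ℝ) (hε : 0 < ε), δ < ε →
      F.cover Bool (inst1 := lambdaMet hε) = {{false}, {true}}) :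
    ∀ (X : Type) [MetricSpace X] [Fintype X] [Nonempty X],
      ∀ A : Set X, IsMaxLinked (fun x y => dist x y ≤ δ) A →
        ∃ B ∈ F.cover X, A ⊆ B := by
  intro X _ _ _ A hA
  obtain ⟨hlink, _⟩ := hA
  apply (F.flag X).2.2 A
  intro x hx y hy
  by_cases hxy : x = y
  · subst hxy
    have hcov := (F.flag X).1.2
    have : x ∈ ⋃₀ F.cover X := by rw [hcov]; trivial
    obtain ⟨B, hB, hxB⟩ := this
    exact ⟨B, hB, hxB, hxB⟩
  · set ε := dist x y with hε_def
    have hε : 0 < ε := dist_pos.2 hxy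
    have hεδ : ε ≤ δ := hlink x hx y hy
    let f : Bool → X := fun b => if b then y else x
    have hf : @Nonexpansive Bool X (lambdaMet hε) _ f := by
      intro a b
      have : @dist Bool (lambdaMet hε).toDist a b =
          dist (if a then ε else 0) (if b then ε else 0) := rfl
      rw [this]
      cases a <;> cases b <;>
        simp [f, Real.dist_eq, abs_of_nonneg hε.le, dist_comm x y, hε_def]
    have := @ClusteringFunctor.functorial F Bool X (lambdaMet hε) _ _ _ _ _ f hf
      {false, true} (by rw [h1 ε hε hεδ]; rfl)
    obtain ⟨B, hB, hsub⟩ := this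
    refine ⟨B, hB, ?_, ?_⟩
    · have : (false : Bool) ∈ ({false, true} : Set Bool) := by simp
      simpa [f] using hsub this
    · have : (true : Bool) ∈ ({false, true} : Set Bool) := by simp
      simpa [f] using hsub this
end

section
/- Let (X, d) be a finite metric space, let δ ≥ 0, and let x, y ∈ X lie in distinct connected components of the δ-threshold graph of X. Then there exist ε > δ and a nonexpansive map f : X → Λ_ε such that f(x) ≠ f(y). -/
/-- The distance function of the two-point metric space `Λ_ε` on `Bool`
(`p := false`, `q := true`, `dist p q = ε`). -/
def lambdaDist (ε : ℝ) (a b : Bool) : ℝ := if a = b then 0 else ε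

/-!
Points in different components of the `δ`-threshold graph are more than `δ` apart. Since `X` is
finite, the distances exceeding `δ` have a minimum `ε > δ`, and the indicator of the component of
`x` is then nonexpansive into `Λ_ε`: points it separates lie in different components, hence at
distance at least `ε`.
-/

theorem exists_gt_forall_lt_imp_le {ι : Type*} [Finite ι] (g : ι → ℝ) (δ : ℝ) :
    ∃ ε, δ < ε ∧ ∀ i, δ < g i → ε ≤ g i := by
  set S := insert (δ + 1) (Set.range g ∩ Set.Ioi δ)
  have hS : S.Finite := ((Set.finite_range g).inter_of_left _).insert _
  obtain ⟨ε, hεS, hmin⟩ := S.exists_min_image id hS ⟨_, Set.mem_insert _ _⟩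
  refine ⟨ε, ?_, fun i hi => hmin (g i) (Or.inr ⟨⟨i, rfl⟩, hi⟩)⟩
  rcases hεS with rfl | ⟨_, hε⟩
  · linarith
  · exact hε

theorem lambdaDist_le_dist {X : Type*} [MetricSpace X] {ε : ℝ} {f : X → Bool}
    (hf : ∀ a b, f a ≠ f b → ε ≤ dist a b) (a b : X) :
    lambdaDist ε (f a) (f b) ≤ dist a b := by
  unfold lambdaDist
  split_ifs with hab
  · exact dist_nonneg
  · exact hf a b hab

namespace thresholdGraph

variable {X : Type*} [MetricSpace X] {δ : ℝ}

theorem reachable_of_dist_le {a b : X} (h : dist a b ≤ δ) : (thresholdGraph X δ).Reachable a b := by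
  by_cases hab : a = b
  · exact hab ▸ SimpleGraph.Reachable.refl a
  · exact SimpleGraph.Adj.reachable ⟨hab, h⟩

theorem lt_dist_of_not_reachable {a b : X} (h : ¬ (thresholdGraph X δ).Reachable a b) :
    δ < dist a b :=
  lt_of_not_ge fun hle => h (reachable_of_dist_le hle)

end thresholdGraph

theorem separation_map_general {X : Type*} [MetricSpace X] [Fintype X]
    (δ : ℝ) (x y : X)
    (hxy : ¬ (thresholdGraph X δ).Reachable x y) :
    ∃ ε : ℝ, δ < ε ∧ ∃ f : X → Bool,
      (∀ a b : X, lambdaDist ε (f a) (f b) ≤ dist a b) ∧ f x ≠ f y := by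
  classical
  let G := thresholdGraph X δ
  obtain ⟨ε, hδε, hε⟩ := exists_gt_forall_lt_imp_le (fun p : X × X => dist p.1 p.2) δ
  let f : X → Bool := fun a => decide (G.connectedComponentMk a = G.connectedComponentMk x)
  have hf : ∀ a b, f a ≠ f b → ε ≤ dist a b := by
    intro a b hab
    have hab' : ¬ G.Reachable a b := fun h => hab (by simp only [f, SimpleGraph.ConnectedComponent.sound h])
    exact hε (a, b) (thresholdGraph.lt_dist_of_not_reachable hab')
  refine ⟨ε, hδε, f, lambdaDist_le_dist hf, ?_⟩
  simpa [f] using fun h : G.Reachable y x => hxy h.symm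

/-- if `x, y` lie in distinct connected components of the `δ`-threshold
graph of a finite metric space `X`, then there are `ε > δ` and a nonexpansive map
`f : X → Λ_ε` with `f x ≠ f y`. -/
theorem separation_map {X : Type*} [MetricSpace X] [Fintype X] [Nonempty X]
    (δ : ℝ) (hδ : 0 ≤ δ) (x y : X)
    (hxy : ¬ (thresholdGraph X δ).Reachable x y) :
    ∃ ε : ℝ, δ < ε ∧ ∃ f : X → Bool,
      (∀ a b : X, lambdaDist ε (f a) (f b) ≤ dist a b) ∧ f x ≠ f y :=
  separation_map_general δ x y hxy
end

section
/- Let (X, d_X) and (Y, d_Y) be finite metric spaces, let f : X → Y be an injective nonexpansive map, let δ ≥ 0, and let k ≥ 1 be an integer. Then every maximal k-vertex-connected subset of X (with respect to the δ-threshold graph of X) is contained in f⁻¹(B) for some maximal k-vertex-connected subset B of Y (with respect to the δ-threshold graph of Y); that is, VL^k_δ(X) refines f⁻¹(VL^k_δ(Y)), so VL^k_δ is functorial for injective nonexpansive maps. -/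
/-- `A` is `k`-vertex-connected w.r.t. `G`: the induced subgraph `G[A]` is connected,
and removing any fewer than `k` vertices from `A` leaves it connected or empty. -/
def IsKVertexConnected {X : Type*} (G : SimpleGraph X) (k : ℕ) (A : Set X) : Prop :=
  (G.induce A).Connected ∧
    ∀ S : Set X, S ⊆ A → S.ncard < k →
      ((G.induce (A \ S)).Connected ∨ A \ S = ∅)

/-- A maximal `k`-vertex-connected subset. -/
def IsMaxKVertexConnected {X : Type*} (G : SimpleGraph X) (k : ℕ) (A : Set X) : Prop :=
  IsKVertexConnected G k A ∧
    ∀ B : Set X, IsKVertexConnected G k B → A ⊆ B → A = B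


/-!
An injective nonexpansive map `f` is a graph homomorphism between the `δ`-threshold
graphs, and injective homomorphisms carry `k`-vertex-connected sets to `k`-vertex-connected
sets (a separator `S` of `f '' A` pulls back to a separator `f ⁻¹' S ∩ A` of `A` of the same
size). Since `Y` is finite, the `k`-vertex-connected set `f '' A` lies in a maximal one.
-/

section

variable {V W : Type*} {G : SimpleGraph V} {G' : SimpleGraph W}

theorem SimpleGraph.Connected.induce_image (φ : G →g G') {A : Set V}
    (h : (G.induce A).Connected) : (G'.induce (φ '' A)).Connected :=
  h.map (SimpleGraph.induceHom φ (Set.mapsTo_image φ A))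
    (Set.surjective_mapsTo_image_restrict φ A)

theorem IsKVertexConnected.image (φ : G →g G') (hφ : Function.Injective φ) {k : ℕ}
    {A : Set V} (h : IsKVertexConnected G k A) : IsKVertexConnected G' k (φ '' A) := by
  refine ⟨h.1.induce_image φ, fun S hS hSk => ?_⟩
  have hS_image : φ '' (φ ⁻¹' S ∩ A) = S := by
    rw [Set.image_preimage_inter, Set.inter_eq_left.mpr hS]
  have hS_card : (φ ⁻¹' S ∩ A).ncard < k := by
    rwa [← Set.ncard_image_of_injective _ hφ, hS_image]
  have hdiff : φ '' (A \ (φ ⁻¹' S ∩ A)) = φ '' A \ S := by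
    rw [Set.image_sdiff hφ, hS_image]
  rw [← hdiff]
  rcases h.2 _ Set.inter_subset_right hS_card with hconn | hempty
  · exact .inl (hconn.induce_image φ)
  · exact .inr (by rw [hempty, Set.image_empty])

theorem isMaxKVertexConnected_iff_maximal {k : ℕ} {A : Set V} :
    IsMaxKVertexConnected G k A ↔ Maximal (IsKVertexConnected G k) A :=
  and_congr_right fun _ =>
    forall₂_congr fun _ _ => ⟨fun h hAB => (h hAB).ge, fun h hAB => hAB.antisymm (h hAB)⟩

theorem IsKVertexConnected.exists_isMaxKVertexConnected_superset [Finite V] {k : ℕ}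
    {A : Set V} (h : IsKVertexConnected G k A) :
    ∃ B, IsMaxKVertexConnected G k B ∧ A ⊆ B := by
  obtain ⟨B, hAB, hB⟩ := Finite.exists_le_maximal h
  exact ⟨B, isMaxKVertexConnected_iff_maximal.mpr hB, hAB⟩

end

def Nonexpansive.thresholdGraphHom {X Y : Type*} [MetricSpace X] [MetricSpace Y] {f : X → Y}
    (hf : Nonexpansive f) (hinj : Function.Injective f) (δ : ℝ) :
    thresholdGraph X δ →g thresholdGraph Y δ where
  toFun := f
  map_rel' {x x'} h := ⟨hinj.ne h.1, (hf x x').trans h.2⟩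

theorem VL_functorial_inj_general {X Y : Type*}
    [MetricSpace X]
    [MetricSpace Y] [Fintype Y]
    (f : X → Y) (hinj : Function.Injective f) (hf : Nonexpansive f)
    (δ : ℝ) (k : ℕ) :
    ∀ A : Set X, IsMaxKVertexConnected (thresholdGraph X δ) k A →
      ∃ B : Set Y, IsMaxKVertexConnected (thresholdGraph Y δ) k B ∧ A ⊆ f ⁻¹' B := by
  intro A hA
  have hfA : IsKVertexConnected (thresholdGraph Y δ) k (f '' A) :=
    (isMaxKVertexConnected_iff_maximal.mp hA).prop.image (hf.thresholdGraphHom hinj δ) hinj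
  obtain ⟨B, hB, hAB⟩ := hfA.exists_isMaxKVertexConnected_superset
  exact ⟨B, hB, Set.image_subset_iff.mp hAB⟩

/-- `VL^k_δ` is functorial for injective nonexpansive maps: every maximal
`k`-vertex-connected subset of `X` (w.r.t. the `δ`-threshold graph) is contained in
`f⁻¹(B)` for some maximal `k`-vertex-connected subset `B` of `Y`. -/
theorem VL_functorial_inj {X Y : Type*}
    [MetricSpace X] [Fintype X] [Nonempty X]
    [MetricSpace Y] [Fintype Y] [Nonempty Y]
    (f : X → Y) (hinj : Function.Injective f) (hf : Nonexpansive f)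
    (δ : ℝ) (hδ : 0 ≤ δ) (k : ℕ) (hk : 1 ≤ k) :
    ∀ A : Set X, IsMaxKVertexConnected (thresholdGraph X δ) k A →
      ∃ B : Set Y, IsMaxKVertexConnected (thresholdGraph Y δ) k B ∧ A ⊆ f ⁻¹' B :=
  VL_functorial_inj_general f hinj hf δ k
end

section
/- The clustering method VL^2 at scale δ = 1 is not functorial for arbitrary nonexpansive maps: there exist finite metric spaces (X, d_X), (Y, d_Y) and a nonexpansive map f : X → Y such that VL^2_1(X) does not refine f⁻¹(VL^2_1(Y)), i.e., some maximal 2-vertex-connected subset of X (with respect to the 1-threshold graph of X) is not contained in f⁻¹(B) for any maximal 2-vertex-connected subset B of Y. -/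
/-!
Take path metrics on graphs: their `1`-threshold graphs are the graphs themselves, and graph
homomorphisms are nonexpansive. Folding the `4`-cycle onto the path with `3` vertices is a
surjective homomorphism. The `4`-cycle is `2`-vertex-connected, hence its own unique maximal
`2`-vertex-connected set; by surjectivity it lies only in the preimage of the whole path, and the
path is not `2`-vertex-connected since its middle vertex is a cut vertex.
-/

/-- `d` is a metric (distance function) on `X`. -/
def IsMetricOn {X : Type*} (d : X → X → ℝ) : Prop :=
  (∀ x, d x x = 0) ∧ (∀ x y, d x y = d y x) ∧
  (∀ x y z, d x z ≤ d x y + d y z) ∧ (∀ x y, d x y = 0 → x = y)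

namespace SimpleGraph

variable {V W : Type*} {G : SimpleGraph V} {H : SimpleGraph W}

theorem Connected.isMetricOn_dist (hG : G.Connected) :
    IsMetricOn fun u v => (G.dist u v : ℝ) := by
  refine ⟨fun u => by simp, fun u v => by simp only [dist_comm], fun u v w => ?_, fun u v h => ?_⟩
  · exact Nat.cast_le.mpr hG.dist_triangle |>.trans_eq (Nat.cast_add _ _)
  · exact hG.dist_eq_zero_iff.mp (Nat.cast_eq_zero.mp h)

theorem Connected.adj_iff_ne_and_dist_le_one (hG : G.Connected) {u v : V} :
    G.Adj u v ↔ u ≠ v ∧ (G.dist u v : ℝ) ≤ 1 := by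
  rw [← dist_eq_one_iff_adj, Nat.cast_le_one]
  constructor
  · rintro h
    exact ⟨fun huv => by simp [huv] at h, h.le⟩
  · rintro ⟨huv, h⟩
    have := hG.pos_dist_of_ne huv
    omega

theorem Hom.dist_map_le (φ : G →g H) {u v : V} (h : G.Reachable u v) :
    H.dist (φ u) (φ v) ≤ G.dist u v := by
  obtain ⟨p, hp⟩ := h.exists_walk_length_eq_dist
  calc H.dist (φ u) (φ v) ≤ (p.map φ).length := dist_le _
    _ = G.dist u v := by rw [Walk.length_map, hp]

theorem isKVertexConnected_two_iff [Finite V] {A : Set V} :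
    IsKVertexConnected G 2 A ↔
      (G.induce A).Connected ∧ ∀ v ∈ A, (G.induce (A \ {v})).Connected ∨ A \ {v} = ∅ := by
  refine and_congr_right fun hA => ⟨fun h v hv => h {v} (by simpa) (by simp), fun h S hSA hS => ?_⟩
  rcases (Set.ncard_le_one_iff_eq S.toFinite).mp (by omega) with rfl | ⟨v, rfl⟩
  · exact Or.inl (by rwa [Set.sdiff_empty])
  · exact h v (hSA rfl)

theorem isMaxKVertexConnected_univ {k : ℕ} (h : IsKVertexConnected G k Set.univ) :
    IsMaxKVertexConnected G k Set.univ :=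
  ⟨h, fun _ _ hB => (Set.univ_subset_iff.mp hB).symm⟩

instance (n : ℕ) : DecidableRel (pathGraph n).Adj := fun _ _ => decidable_of_iff' _ pathGraph_adj

theorem isKVertexConnected_cycleGraph_four : IsKVertexConnected (cycleGraph 4) 2 Set.univ :=
  isKVertexConnected_two_iff.mpr ⟨by decide, fun v _ => Or.inl (by revert v; decide)⟩

theorem not_isKVertexConnected_pathGraph_three :
    ¬ IsKVertexConnected (pathGraph 3) 2 Set.univ := by
  rw [isKVertexConnected_two_iff]
  rintro ⟨-, h⟩
  have hdisconnected : ¬ ((pathGraph 3).induce (Set.univ \ {1})).Connected := by decide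
  have hnonempty : (Set.univ \ {(1 : Fin 3)}).Nonempty := ⟨0, by simp⟩
  exact (h 1 trivial).elim hdisconnected hnonempty.ne_empty

def cycleGraphFourFold : cycleGraph 4 →g pathGraph 3 where
  toFun := ![0, 1, 2, 1]
  map_rel' := by decide

theorem cycleGraphFourFold_surjective : Function.Surjective cycleGraphFourFold := by decide

end SimpleGraph

open SimpleGraph in
/-- `VL²₁` is not functorial on `Met`: there are finite metric spaces
`(X, dX)`, `(Y, dY)` (with `1`-threshold graphs `GX`, `GY`) and a nonexpansive map
`f : X → Y` such that some maximal `2`-vertex-connected subset of `X` is contained in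
no preimage `f⁻¹(B)` of a maximal `2`-vertex-connected subset `B` of `Y`. -/
theorem VL_not_functorial_on_Met :
    ∃ (X Y : Type) (_ : Fintype X) (_ : Fintype Y) (_ : Nonempty X) (_ : Nonempty Y)
      (dX : X → X → ℝ) (dY : Y → Y → ℝ)
      (GX : SimpleGraph X) (GY : SimpleGraph Y) (f : X → Y),
      IsMetricOn dX ∧ IsMetricOn dY ∧
      (∀ a b : X, GX.Adj a b ↔ a ≠ b ∧ dX a b ≤ 1) ∧
      (∀ a b : Y, GY.Adj a b ↔ a ≠ b ∧ dY a b ≤ 1) ∧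
      (∀ a b : X, dY (f a) (f b) ≤ dX a b) ∧
      ∃ A : Set X, IsMaxKVertexConnected GX 2 A ∧
        ∀ B : Set Y, IsMaxKVertexConnected GY 2 B → ¬ A ⊆ f ⁻¹' B := by
  have hX : (cycleGraph 4).Connected := cycleGraph_connected
  have hY : (pathGraph 3).Connected := pathGraph_connected 2
  refine ⟨Fin 4, Fin 3, inferInstance, inferInstance, inferInstance, inferInstance,
    fun u v => ((cycleGraph 4).dist u v : ℝ), fun u v => ((pathGraph 3).dist u v : ℝ),
    cycleGraph 4, pathGraph 3, cycleGraphFourFold, hX.isMetricOn_dist, hY.isMetricOn_dist,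
    fun _ _ => hX.adj_iff_ne_and_dist_le_one, fun _ _ => hY.adj_iff_ne_and_dist_le_one,
    fun u v => Nat.cast_le.mpr (cycleGraphFourFold.dist_map_le (hX u v)), Set.univ,
    isMaxKVertexConnected_univ isKVertexConnected_cycleGraph_four, fun B hB hAB => ?_⟩
  have hB_univ : B = Set.univ := by
    rwa [Set.univ_subset_iff, Set.preimage_eq_univ_iff,
      cycleGraphFourFold_surjective.range_eq, Set.univ_subset_iff] at hAB
  exact not_isKVertexConnected_pathGraph_three (hB_univ ▸ hB.1)
end

section
/- The clustering method EL^2 at scale δ = 1 is not functorial for arbitrary nonexpansive maps: there exist finite metric spaces (X, d_X), (Y, d_Y) and a nonexpansive map f : X → Y such that EL^2_1(X) does not refine f⁻¹(EL^2_1(Y)), i.e., some maximal 2-edge-connected subset of X (with respect to the 1-threshold graph of X) is not contained in f⁻¹(B) for any maximal 2-edge-connected subset B of Y. -/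
/-- `A` is `k`-edge-connected w.r.t. `G`: the induced subgraph `G[A]` is connected,
and remains connected after deleting any set of fewer than `k` of its edges. -/
def IsKEdgeConnected {X : Type*} (G : SimpleGraph X) (k : ℕ) (A : Set X) : Prop :=
  (G.induce A).Connected ∧
    ∀ F : Set (Sym2 A), F ⊆ (G.induce A).edgeSet → F.ncard < k →
      ((G.induce A).deleteEdges F).Connected

/-- A maximal `k`-edge-connected subset. -/
def IsMaxKEdgeConnected {X : Type*} (G : SimpleGraph X) (k : ℕ) (A : Set X) : Prop :=
  IsKEdgeConnected G k A ∧
    ∀ B : Set X, IsKEdgeConnected G k B → A ⊆ B → A = B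

lemma discreteMetric_isMetric {X : Type*} [DecidableEq X] :
    IsMetricOn (fun a b : X => if a = b then (0:ℝ) else 1) := by
  refine ⟨fun x => by simp, fun x y => ?_, fun x y z => ?_, fun x y h => ?_⟩
  · by_cases h : x = y <;> simp [h, Ne.symm, eq_comm]
  · by_cases h1 : x = z <;> by_cases h2 : x = y <;> by_cases h3 : y = z <;>
      simp_all
  · by_contra hne; simp [hne] at h

-- the 3-clique: deleting at most one edge keeps it connected
lemma triangle_del {F : Set (Sym2 ↥(Set.univ : Set (Fin 3)))} (hF : F.ncard < 2) :
    (((⊤ : SimpleGraph (Fin 3)).induce Set.univ).deleteEdges F).Connected := by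
  rw [SimpleGraph.connected_iff]
  refine ⟨fun u v => ?_, ⟨⟨0, Set.mem_univ _⟩⟩⟩
  by_cases huv : u = v
  · exact huv ▸ SimpleGraph.Reachable.refl u
  have hval : (u : Fin 3) ≠ (v : Fin 3) := fun h => huv (Subtype.ext h)
  by_cases hm : s(u, v) ∈ F
  · -- F = {s(u,v)}
    have hsingle : ∀ e ∈ F, e = s(u, v) := by
      intro e he
      by_contra hne
      have : 1 < F.ncard := Set.one_lt_ncard_iff (Set.toFinite F) |>.2 ⟨e, s(u,v), he, hm, hne⟩
      omega
    have h3 : ∀ a b : Fin 3, a ≠ b → ∃ c, c ≠ a ∧ c ≠ b := by decide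
    obtain ⟨c, hcu, hcv⟩ := h3 _ _ hval
    set w : ↥(Set.univ : Set (Fin 3)) := ⟨c, Set.mem_univ _⟩ with hw
    have hwu : w ≠ u := fun h => hcu (congrArg Subtype.val h)
    have hwv : w ≠ v := fun h => hcv (congrArg Subtype.val h)
    have h1 : (((⊤ : SimpleGraph (Fin 3)).induce Set.univ).deleteEdges F).Adj u w := by
      refine SimpleGraph.deleteEdges_adj.2 ⟨?_, ?_⟩
      · exact fun h => hwu (Subtype.ext h.symm)
      · intro hmem
        have := hsingle _ hmem
        rw [Sym2.eq_iff] at this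
        rcases this with ⟨_, h⟩ | ⟨h, _⟩
        · exact hwv h
        · exact huv h
    have h2 : (((⊤ : SimpleGraph (Fin 3)).induce Set.univ).deleteEdges F).Adj w v := by
      refine SimpleGraph.deleteEdges_adj.2 ⟨?_, ?_⟩
      · exact fun h => hwv (Subtype.ext h)
      · intro hmem
        have := hsingle _ hmem
        rw [Sym2.eq_iff] at this
        rcases this with ⟨h, _⟩ | ⟨h, _⟩
        · exact hwu h
        · exact hwv h
    exact (h1.reachable).trans h2.reachable
  · exact (SimpleGraph.deleteEdges_adj.2 ⟨hval, hm⟩).reachable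


/-- `EL²₁` is not functorial on `Met`: there are finite metric spaces
`(X, dX)`, `(Y, dY)` (with `1`-threshold graphs `GX`, `GY`) and a nonexpansive map
`f : X → Y` such that some maximal `2`-edge-connected subset of `X` is contained in
no preimage `f⁻¹(B)` of a maximal `2`-edge-connected subset `B` of `Y`. -/
theorem EL_not_functorial_on_Met :
    ∃ (X Y : Type) (_ : Fintype X) (_ : Fintype Y) (_ : Nonempty X) (_ : Nonempty Y)
      (dX : X → X → ℝ) (dY : Y → Y → ℝ)
      (GX : SimpleGraph X) (GY : SimpleGraph Y) (f : X → Y),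
      IsMetricOn dX ∧ IsMetricOn dY ∧
      (∀ a b : X, GX.Adj a b ↔ a ≠ b ∧ dX a b ≤ 1) ∧
      (∀ a b : Y, GY.Adj a b ↔ a ≠ b ∧ dY a b ≤ 1) ∧
      (∀ a b : X, dY (f a) (f b) ≤ dX a b) ∧
      ∃ A : Set X, IsMaxKEdgeConnected GX 2 A ∧
        ∀ B : Set Y, IsMaxKEdgeConnected GY 2 B → ¬ A ⊆ f ⁻¹' B := by
  refine ⟨Fin 3, Bool, inferInstance, inferInstance, ⟨0⟩, ⟨true⟩,
    (fun a b => if a = b then 0 else 1), (fun a b => if a = b then 0 else 1),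
    ⊤, ⊤, (fun x => decide (x = 0)), discreteMetric_isMetric, discreteMetric_isMetric,
    ?_, ?_, ?_, Set.univ, ⟨⟨?_, fun F _ hF => triangle_del hF⟩, fun B _ hB => (Set.univ_subset_iff.mp hB).symm⟩, ?_⟩
  · intro a b
    by_cases h : a = b <;> simp [h]
  · intro a b
    by_cases h : a = b <;> simp [h]
  · intro a b
    by_cases h : a = b
    · simp [h]
    · simp only [h, if_false]
      split <;> norm_num
  · have := triangle_del (F := ∅) (by simp)
    rwa [SimpleGraph.deleteEdges_empty] at this
  · -- the Y side
    rintro B ⟨⟨hconn, h2⟩, _⟩ hsub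
    have ht : true ∈ B := by have := hsub (Set.mem_univ (0 : Fin 3)); simpa using this
    have hf : false ∈ B := by have := hsub (Set.mem_univ (1 : Fin 3)); simpa using this
    set u : ↥B := ⟨true, ht⟩ with hu
    set v : ↥B := ⟨false, hf⟩ with hv
    set e : Sym2 ↥B := s(u, v) with he
    have hFe : ({e} : Set (Sym2 ↥B)) ⊆ ((⊤ : SimpleGraph Bool).induce B).edgeSet := by
      intro x hx
      rw [Set.mem_singleton_iff] at hx
      subst hx
      rw [SimpleGraph.mem_edgeSet]
      simp [hu, hv, SimpleGraph.comap_adj]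
    have hcon := h2 {e} hFe (by simp)
    have hbot : (((⊤ : SimpleGraph Bool).induce B).deleteEdges {e}) = ⊥ := by
      ext a b
      simp only [SimpleGraph.deleteEdges_adj, SimpleGraph.bot_adj, iff_false, not_and, not_not,
        Set.mem_singleton_iff]
      intro hab
      obtain ⟨ba, hba⟩ := a
      obtain ⟨bb, hbb⟩ := b
      have hne : ba ≠ bb := by
        intro hh
        exact hab.ne (Subtype.ext hh)
      cases ba <;> cases bb <;>
        first
          | exact absurd rfl hne
          | rfl
          | exact Sym2.eq_swap
    have hreach := hcon.preconnected u v
    rw [hbot] at hreach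
    have : u = v := SimpleGraph.reachable_bot.mp hreach
    simp [hu, hv, Subtype.ext_iff] at this
end
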